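/- arXiv:1912.01324 — 4 statements merged into one kernel-verified Lean document; each statement's English description precedes it below -/
import Mathlib

section
/- Every Handelman number is a weak Perron number. That is, if λ > 0 is a real root of a polynomial x^n − Σ_{i=0}^{n-1} a_i x^i with all a_i ∈ ℤ_{≥0} and (a_0,…,a_{n-1}) ≠ 0, then λ is an algebraic integer with λ ≥ 1 and all complex Galois conjugates μ of λ satisfy |μ| ≤ λ. -/
open Polynomial

/-- Every Handelman number is a weak Perron number. -/
theorem stmt_2 (n : ℕ) (hn : 1 ≤ n) (a : Fin n → ℕ) (ha0 : a ≠ 0) (lam : ℝ)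
    (hpos : 0 < lam) (hroot : lam ^ n = ∑ i : Fin n, (a i : ℝ) * lam ^ (i : ℕ)) :
    IsIntegral ℤ lam ∧ 1 ≤ lam ∧
      ∀ μ : ℂ, Polynomial.aeval μ (minpoly ℚ lam) = 0 → ‖μ‖ ≤ lam := by
  set p : ℤ[X] := X ^ n - ∑ i : Fin n, C (a i : ℤ) * X ^ (i : ℕ) with hp
  have hdeg : (∑ i : Fin n, C (a i : ℤ) * X ^ (i : ℕ)).degree < (n : WithBot ℕ) := by
    refine lt_of_le_of_lt (Polynomial.degree_sum_le _ _) ?_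
    rw [Finset.sup_lt_iff (by exact_mod_cast WithBot.bot_lt_coe n)]
    intro i _
    exact lt_of_le_of_lt (degree_C_mul_X_pow_le _ _) (by exact_mod_cast i.2)
  have hmonic : p.Monic := Polynomial.monic_X_pow_sub hdeg
  have hplam : (aeval lam p) = 0 := by
    simp only [hp, map_sub, map_pow, aeval_X, map_sum, map_mul, aeval_C, map_intCast, map_natCast, algebraMap_int_eq,
      eq_intCast, Int.cast_natCast]
    rw [hroot]; ring
  have hint : IsIntegral ℤ lam := ⟨p, hmonic, hplam⟩
  have hge1 : 1 ≤ lam := by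
    obtain ⟨j, hj⟩ := Function.ne_iff.1 ha0
    have hterm : lam ^ (j : ℕ) ≤ lam ^ n := by
      rw [hroot]
      calc lam ^ (j : ℕ) ≤ (a j : ℝ) * lam ^ (j : ℕ) := by
            refine le_mul_of_one_le_left (by positivity) ?_
            exact_mod_cast Nat.one_le_iff_ne_zero.2 hj
        _ ≤ ∑ i : Fin n, (a i : ℝ) * lam ^ (i : ℕ) :=
            Finset.single_le_sum (f := fun i : Fin n => (a i : ℝ) * lam ^ (i : ℕ))
              (fun i _ => by positivity) (Finset.mem_univ j)
    by_contra h
    push_neg at h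
    exact absurd hterm (not_le.2 (pow_lt_pow_right_of_lt_one₀ hpos h j.2))
  refine ⟨hint, hge1, ?_⟩
  intro μ hμ
  have hq : minpoly ℚ lam ∣ p.map (algebraMap ℤ ℚ) :=
    minpoly.dvd ℚ lam (by rw [aeval_map_algebraMap]; exact hplam)
  obtain ⟨s, hs⟩ := hq
  have hμp : (aeval μ) p = 0 := by
    have : (aeval μ) (p.map (algebraMap ℤ ℚ)) = 0 := by
      rw [hs, map_mul, hμ, zero_mul]
    rwa [aeval_map_algebraMap] at this
  have hμroot : μ ^ n = ∑ i : Fin n, (a i : ℂ) * μ ^ (i : ℕ) := by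
    simp only [hp, map_sub, map_pow, aeval_X, map_sum, map_mul, aeval_C, map_intCast, map_natCast, algebraMap_int_eq,
      eq_intCast, Int.cast_natCast] at hμp
    exact sub_eq_zero.1 hμp
  set r := ‖μ‖ with hr
  have hrn : r ^ n ≤ ∑ i : Fin n, (a i : ℝ) * r ^ (i : ℕ) := by
    calc r ^ n = ‖μ ^ n‖ := (norm_pow _ _).symm
      _ = ‖∑ i : Fin n, (a i : ℂ) * μ ^ (i : ℕ)‖ := by rw [hμroot]
      _ ≤ ∑ i : Fin n, ‖(a i : ℂ) * μ ^ (i : ℕ)‖ := norm_sum_le _ _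
      _ = ∑ i : Fin n, (a i : ℝ) * r ^ (i : ℕ) := by
          simp [norm_mul, norm_pow, Complex.norm_natCast, hr]
  by_contra hlt
  push_neg at hlt
  obtain ⟨m, rfl⟩ : ∃ m, n = m + 1 := ⟨n - 1, (Nat.succ_pred_eq_of_pos hn).symm⟩
  have hrpos : 0 < r := lt_trans hpos hlt
  have hdiv : 1 ≤ r / lam := (one_le_div hpos).2 hlt.le
  have hbound : ∀ i : Fin (m + 1),
      (a i : ℝ) * r ^ (i : ℕ) ≤ (a i : ℝ) * lam ^ (i : ℕ) * (r / lam) ^ m := by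
    intro i
    have h1 : r ^ (i : ℕ) = lam ^ (i : ℕ) * (r / lam) ^ (i : ℕ) := by
      rw [← mul_pow]; congr 1; rw [mul_div_assoc', eq_div_iff hpos.ne']; ring
    have h2 : (r / lam) ^ (i : ℕ) ≤ (r / lam) ^ m :=
      pow_le_pow_right₀ hdiv (Nat.lt_succ_iff.1 i.2)
    rw [h1, ← mul_assoc]
    exact mul_le_mul_of_nonneg_left h2 (by positivity)
  have hsum : ∑ i : Fin (m + 1), (a i : ℝ) * r ^ (i : ℕ) ≤ lam ^ (m + 1) * (r / lam) ^ m := by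
    calc ∑ i : Fin (m + 1), (a i : ℝ) * r ^ (i : ℕ)
        ≤ ∑ i : Fin (m + 1), (a i : ℝ) * lam ^ (i : ℕ) * (r / lam) ^ m :=
          Finset.sum_le_sum fun i _ => hbound i
      _ = (∑ i : Fin (m + 1), (a i : ℝ) * lam ^ (i : ℕ)) * (r / lam) ^ m := by
          rw [Finset.sum_mul]
      _ = lam ^ (m + 1) * (r / lam) ^ m := by rw [← hroot]
  have hkey : lam ^ (m + 1) * (r / lam) ^ m = lam * r ^ m := by
    rw [div_pow, pow_succ]
    field_simp
  have hfin : r ^ (m + 1) < r ^ (m + 1) := by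
    calc r ^ (m + 1) ≤ lam ^ (m + 1) * (r / lam) ^ m := le_trans hrn hsum
      _ = lam * r ^ m := hkey
      _ < r * r ^ m := by
          exact mul_lt_mul_of_pos_right hlt (by positivity)
      _ = r ^ (m + 1) := by ring
  exact lt_irrefl _ hfin
end

section
/- Let n, N ≥ 1 and let S_1, …, S_N be n×n real matrices with non-negative entries such that for all i, j ∈ {1,…,N} and each row index l, replacing the l-th row of S_i by the l-th row of S_j yields a matrix in {S_1,…,S_N}. Let v ∈ ℝ^n with v ≥ 0 (componentwise) be an eigenvector of S_1 to an eigenvalue λ ≥ 0, and suppose λ > ρ(S_i) for each i ∈ {2,…,N}, where ρ denotes the spectral radius. Then S_i v ≤ λ v (componentwise) for each i ∈ {1,…,N}. -/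
open Matrix

open Polynomial Filter

attribute [local instance] Matrix.linftyOpNormedRing Matrix.linftyOpNormedAlgebra

lemma charpoly_root_of_mem_spectrum {m : ℕ} (A : Matrix (Fin (m+1)) (Fin (m+1)) ℂ) (ξ : ℂ)
    (h : ξ ∈ spectrum ℂ A) : A.charpoly.IsRoot ξ := by
  rw [spectrum.mem_iff] at h
  have hdet : A.charpoly.eval ξ
      = ((algebraMap ℂ (Matrix (Fin (m+1)) (Fin (m+1)) ℂ)) ξ - A).det := by
    rw [Matrix.charpoly, ← Polynomial.coe_evalRingHom, RingHom.map_det]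
    congr 1
    ext i j
    by_cases hij : i = j
    · subst hij
      simp [Matrix.charmatrix_apply_eq, Matrix.algebraMap_matrix_apply]
    · simp [Matrix.charmatrix_apply_ne _ _ _ hij, Matrix.algebraMap_matrix_apply, hij]
  by_contra hroot
  refine h <| (Matrix.isUnit_iff_isUnit_det _).mpr <| isUnit_iff_ne_zero.mpr fun h0 => hroot ?_
  rw [Polynomial.IsRoot, hdet, h0]

lemma no_subinvariant {m : ℕ} (T : Matrix (Fin (m+1)) (Fin (m+1)) ℝ)
    (hT : ∀ k l, 0 ≤ T k l)
    (v : Fin (m+1) → ℝ) (hv : ∀ l, 0 ≤ v l) (hv0 : v ≠ 0) (lam : ℝ) (hlam : 0 < lam)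
    (hTv : ∀ l, lam * v l ≤ (T *ᵥ v) l)
    (hspec : ∀ ξ : ℂ, (T.charpoly.map (algebraMap ℝ ℂ)).IsRoot ξ → ‖ξ‖ < lam) :
    False := by
  -- a positive coordinate
  obtain ⟨l0, hl0⟩ : ∃ l, 0 < v l := by
    by_contra hc
    push_neg at hc
    exact hv0 (funext fun l => le_antisymm (hc l) (hv l))
  -- powers of T are nonneg
  have hTk : ∀ k : ℕ, ∀ a b, 0 ≤ (T ^ k) a b := by
    intro k
    induction k with
    | zero => intro a b; simp [Matrix.one_apply]; positivity
    | succ k ih =>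
      intro a b
      rw [pow_succ, Matrix.mul_apply]
      exact Finset.sum_nonneg fun j _ => mul_nonneg (ih a j) (hT j b)
  -- iterated subinvariance
  have hpow : ∀ k : ℕ, ∀ l, lam ^ k * v l ≤ (T ^ k *ᵥ v) l := by
    intro k
    induction k with
    | zero => intro l; simp [Matrix.one_mulVec]
    | succ k ih =>
      intro l
      have h1 : (T ^ (k+1)) *ᵥ v = T ^ k *ᵥ (T *ᵥ v) := by
        rw [Matrix.mulVec_mulVec, pow_succ]
      rw [h1]
      have h2 : (T ^ k *ᵥ (lam • v)) l ≤ (T ^ k *ᵥ (T *ᵥ v)) l := by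
        simp only [Matrix.mulVec, dotProduct]
        refine Finset.sum_le_sum fun j _ => mul_le_mul_of_nonneg_left ?_ (hTk k l j)
        simpa [Matrix.mulVec, dotProduct] using hTv j
      have h3 : (T ^ k *ᵥ (lam • v)) l = lam * (T ^ k *ᵥ v) l := by
        rw [Matrix.mulVec_smul]; simp
      calc lam ^ (k+1) * v l = lam * (lam ^ k * v l) := by ring
        _ ≤ lam * (T ^ k *ᵥ v) l := by
            exact mul_le_mul_of_nonneg_left (ih l) hlam.le
        _ = (T ^ k *ᵥ (lam • v)) l := h3.symm
        _ ≤ _ := h2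
  -- complexify
  set A : Matrix (Fin (m+1)) (Fin (m+1)) ℂ := T.map (algebraMap ℝ ℂ) with hA
  have hcp : A.charpoly = T.charpoly.map (algebraMap ℝ ℂ) := Matrix.charpoly_map T _
  have hρ : spectralRadius ℂ A < (lam.toNNReal : ENNReal) := by
    refine spectrum.spectralRadius_lt_of_forall_lt A fun ξ hξ => ?_
    have := hspec ξ (hcp ▸ charpoly_root_of_mem_spectrum A ξ hξ)
    rw [← norm_toNNReal, Real.toNNReal_lt_toNNReal_iff hlam]
    simpa using this
  obtain ⟨c, hc1, hc2⟩ := exists_between hρ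
  have hcne : c ≠ ⊤ := hc2.ne_top
  set r : ℝ := c.toReal with hr
  have hr0 : 0 ≤ r := ENNReal.toReal_nonneg
  have hrlam : r < lam := by
    have := ENNReal.toReal_strict_mono ENNReal.coe_ne_top hc2
    rwa [ENNReal.coe_toReal, Real.coe_toNNReal _ hlam.le] at this
  -- eventually norm bound
  have hev : ∀ᶠ k : ℕ in atTop, (‖A ^ k‖₊ : ENNReal) ^ (1/(k:ℝ)) < c :=
    (spectrum.pow_nnnorm_pow_one_div_tendsto_nhds_spectralRadius A).eventually_lt_const hc1
  -- the complexified vector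
  set w : Fin (m+1) → ℂ := fun l => (v l : ℂ) with hwdef
  have hwA : ∀ k : ℕ, ∀ l, (A ^ k *ᵥ w) l = ((T ^ k *ᵥ v) l : ℂ) := by
    intro k l
    have hAk : A ^ k = (T ^ k).map (algebraMap ℝ ℂ) := by
      rw [hA, ← RingHom.mapMatrix_apply, ← RingHom.mapMatrix_apply, map_pow]
    rw [hAk]
    simp only [Matrix.mulVec, dotProduct, Matrix.map_apply, hwdef]
    push_cast
    rfl
  have hwnorm : 0 < ‖w‖ := by
    have h1 : ‖w l0‖ ≤ ‖w‖ := by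
      simpa using norm_le_pi_norm w l0
    have : (0:ℝ) < ‖w l0‖ := by
      simpa [hwdef, Complex.norm_real, Real.norm_eq_abs, abs_of_pos hl0] using hl0
    linarith
  -- eventual smallness of geometric term
  have hgeo : Tendsto (fun k : ℕ => (r/lam) ^ k * ‖w‖) atTop (nhds 0) := by
    have h1 : Tendsto (fun k : ℕ => (r/lam) ^ k) atTop (nhds 0) := by
      refine tendsto_pow_atTop_nhds_zero_of_lt_one (by positivity) ?_
      rw [div_lt_one hlam]; exact hrlam
    simpa using h1.mul_const ‖w‖
  have hev2 : ∀ᶠ k : ℕ in atTop, (r/lam) ^ k * ‖w‖ < v l0 :=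
    hgeo.eventually_lt_const hl0
  obtain ⟨k, hk1, hkev, hkev2⟩ := ((eventually_ge_atTop 1).and (hev.and hev2)).exists
  -- norm bound for A ^ k
  have hnorm : ‖A ^ k‖ ≤ r ^ k := by
    have hk0 : (k:ℝ) ≠ 0 := by positivity
    have h2' : ((‖A ^ k‖₊ : ENNReal) ^ (1/(k:ℝ))) ^ (k:ℝ) = (‖A ^ k‖₊ : ENNReal) := by
      rw [← ENNReal.rpow_mul, one_div, inv_mul_cancel₀ hk0, ENNReal.rpow_one]
    have h1 : (‖A ^ k‖₊ : ENNReal) < c ^ k := by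
      rw [← ENNReal.rpow_natCast c k, ← h2']
      exact ENNReal.rpow_lt_rpow hkev (by positivity)
    have h3 := ENNReal.toReal_mono (ENNReal.pow_ne_top hcne) h1.le
    simpa [ENNReal.toReal_pow] using h3
  -- the contradiction
  have hmain : lam ^ k * v l0 ≤ r ^ k * ‖w‖ := by
    calc lam ^ k * v l0 ≤ (T ^ k *ᵥ v) l0 := hpow k l0
      _ = ‖(A ^ k *ᵥ w) l0‖ := by
          rw [hwA k l0, Complex.norm_real, Real.norm_eq_abs, abs_of_nonneg]
          exact le_trans (by positivity) (hpow k l0)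
      _ ≤ ‖A ^ k *ᵥ w‖ := by
          simpa using norm_le_pi_norm (A ^ k *ᵥ w) l0
      _ ≤ ‖A ^ k‖ * ‖w‖ := Matrix.linfty_opNorm_mulVec _ _
      _ ≤ r ^ k * ‖w‖ := mul_le_mul_of_nonneg_right hnorm hwnorm.le
  have hlt : r ^ k * ‖w‖ < lam ^ k * v l0 := by
    have := mul_lt_mul_of_pos_left hkev2 (pow_pos hlam k)
    calc r ^ k * ‖w‖ = lam ^ k * ((r/lam) ^ k * ‖w‖) := by
          field_simp [div_pow]
          rw [← mul_pow]; congr 1; field_simp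
      _ < lam ^ k * v l0 := this
  linarith

/-- If a family of non-negative matrices is closed under exchanging rows, `v ≥ 0` is an
eigenvector of the first one to an eigenvalue `λ ≥ 0` bigger than the spectral radius of
all the other matrices, then `S_i v ≤ λ v` componentwise for all `i`. -/
theorem stmt_3 (n N : ℕ) (S : Fin (N + 1) → Matrix (Fin (n + 1)) (Fin (n + 1)) ℝ)
    (hnonneg : ∀ i k l, 0 ≤ S i k l)
    (hdistinct : Function.Injective S)
    (hclosed : ∀ i j : Fin (N + 1), ∀ l : Fin (n + 1),
      ∃ m : Fin (N + 1), (S i).updateRow l (S j l) = S m)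
    (v : Fin (n + 1) → ℝ) (hv : ∀ l, 0 ≤ v l) (hv0 : v ≠ 0)
    (lam : ℝ) (hlam : 0 ≤ lam) (heig : (S 0) *ᵥ v = lam • v)
    (hrho : ∀ i : Fin (N + 1), i ≠ 0 → ∀ ξ : ℂ,
      ((S i).charpoly.map (algebraMap ℝ ℂ)).IsRoot ξ → ‖ξ‖ < lam) :
    ∀ i l, ((S i) *ᵥ v) l ≤ lam * v l := by
  intro i l
  by_contra hcon
  push_neg at hcon
  -- the mixed matrices belong to the family
  have hmem : ∀ G : Finset (Fin (n+1)),
      ∃ m, (Matrix.of fun k j => if k ∈ G then S i k j else S 0 k j) = S m := by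
    intro G
    induction G using Finset.induction_on with
    | empty => exact ⟨0, by ext k j; simp⟩
    | @insert a G ha ih =>
      obtain ⟨m, hm⟩ := ih
      obtain ⟨m', hm'⟩ := hclosed m i a
      refine ⟨m', ?_⟩
      rw [← hm', ← hm]
      ext k j
      by_cases hk : k = a
      · subst hk
        simp [Matrix.updateRow_self]
      · simp [Matrix.updateRow_ne hk, Finset.mem_insert, hk]
  obtain ⟨m, hm⟩ := hmem (Finset.univ.filter fun j => lam * v j < (S i *ᵥ v) j)
  set T : Matrix (Fin (n+1)) (Fin (n+1)) ℝ :=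
    Matrix.of fun k j =>
      if k ∈ (Finset.univ.filter fun j => lam * v j < (S i *ᵥ v) j) then S i k j else S 0 k j
    with hTdef
  have hTrow : ∀ j, (T *ᵥ v) j
      = if lam * v j < (S i *ᵥ v) j then (S i *ᵥ v) j else (S 0 *ᵥ v) j := by
    intro j
    by_cases hj : lam * v j < (S i *ᵥ v) j <;>
      simp [hTdef, Matrix.mulVec, dotProduct, hj]
  have hS0 : ∀ j, (S 0 *ᵥ v) j = lam * v j := fun j => by rw [heig]; simp
  have hTv : ∀ j, lam * v j ≤ (T *ᵥ v) j := by
    intro j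
    rw [hTrow j]
    by_cases hj : lam * v j < (S i *ᵥ v) j
    · rw [if_pos hj]; exact hj.le
    · rw [if_neg hj, hS0]
  have hstrict : lam * v l < (T *ᵥ v) l := by
    rw [hTrow l, if_pos hcon]; exact hcon
  by_cases hm0 : m = 0
  · subst hm0
    rw [hm, hS0 l] at hstrict
    exact lt_irrefl _ hstrict
  · -- lam is positive
    have hlampos : 0 < lam := by
      have hdeg : 0 < ((S m).charpoly.map (algebraMap ℝ ℂ)).degree := by
        rw [Polynomial.degree_map_eq_of_injective (algebraMap ℝ ℂ).injective,
          (S m).charpoly_degree_eq_dim, Fintype.card_fin]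
        exact_mod_cast Nat.succ_pos n
      obtain ⟨ξ0, hξ0⟩ := Complex.exists_root hdeg
      exact lt_of_le_of_lt (norm_nonneg ξ0) (hrho m hm0 ξ0 hξ0)
    exact no_subinvariant (S m) (hnonneg m) v hv hv0 lam hlampos
      (fun j => hm ▸ hTv j) (hrho m hm0)
end

section
/- Let d ≥ 3 be an integer. There is no integer a with 0 ≤ a ≤ d such that √(1 + 4d) = (a − 1) + √(a² + 4d − 4a). -/
/-!
As a function of a real `a`, the right-hand side `(a - 1) + √((a - 2)² + 4d - 4)` is increasing.
At `a = 1` it equals `√(4d - 3)`, which is less than `√(1 + 4d)`; at `a = 2` it equals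
`1 + √(4d - 4)`, which is greater than `√(1 + 4d)` exactly when `d > 2`. So every real solution
lies strictly between `1` and `2`, and none is an integer.
-/

namespace Real

theorem sub_one_add_sqrt_lt_sqrt_of_le_one {a d : ℝ} (hd : 1 ≤ d) (ha : a ≤ 1) :
    (a - 1) + √(a ^ 2 + 4 * d - 4 * a) < √(1 + 4 * d) := by
  have ht : 1 ≤ √(4 * d - 3) := Real.one_le_sqrt.mpr (by linarith)
  have hsq : √(4 * d - 3) ^ 2 = 4 * d - 3 := Real.sq_sqrt (by linarith)
  have hle : √(a ^ 2 + 4 * d - 4 * a) ≤ √(4 * d - 3) + (1 - a) := by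
    rw [Real.sqrt_le_iff]
    refine ⟨by linarith, ?_⟩
    nlinarith [mul_nonneg (sub_nonneg.mpr ha) (sub_nonneg.mpr ht)]
  have hlt : √(4 * d - 3) < √(1 + 4 * d) := Real.sqrt_lt_sqrt (by linarith) (by linarith)
  linarith

theorem sqrt_lt_sub_one_add_sqrt_of_two_le {a d : ℝ} (hd : 2 < d) (ha : 2 ≤ a) :
    √(1 + 4 * d) < (a - 1) + √(a ^ 2 + 4 * d - 4 * a) := by
  have ht : 2 < √(4 * d - 4) := Real.lt_sqrt (by norm_num) |>.mpr (by linarith)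
  have hsq : √(4 * d - 4) ^ 2 = 4 * d - 4 := Real.sq_sqrt (by linarith)
  have hlt : √(1 + 4 * d) < 1 + √(4 * d - 4) := by
    rw [Real.sqrt_lt' (by positivity)]
    nlinarith
  have hle : √(4 * d - 4) ≤ √(a ^ 2 + 4 * d - 4 * a) :=
    Real.sqrt_le_sqrt (by nlinarith [sq_nonneg (a - 2)])
  linarith

end Real

/-- For `d ≥ 3` there is no integer `0 ≤ a ≤ d` with
`√(1+4d) = (a-1) + √(a²+4d-4a)`. -/
theorem stmt_5 (d : ℤ) (hd : 3 ≤ d) :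
    ¬ ∃ a : ℤ, 0 ≤ a ∧ a ≤ d ∧
      Real.sqrt (1 + 4 * (d : ℝ)) =
        ((a : ℝ) - 1) + Real.sqrt ((a : ℝ) ^ 2 + 4 * (d : ℝ) - 4 * (a : ℝ)) := by
  rintro ⟨a, -, -, h⟩
  have hd' : (3 : ℝ) ≤ d := by exact_mod_cast hd
  rcases le_or_gt a 1 with ha | ha
  · have ha' : (a : ℝ) ≤ 1 := by exact_mod_cast ha
    exact (Real.sub_one_add_sqrt_lt_sqrt_of_le_one (by linarith) ha').ne' h
  · have ha' : (2 : ℝ) ≤ a := by exact_mod_cast ha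
    exact (Real.sqrt_lt_sub_one_add_sqrt_of_two_le (by linarith) ha').ne h
end

section
/- Let λ be a real number. If λ^m is a Perron number for some integer m ≥ 1 and λ > 0, then λ is a weak Perron number. -/
/-!
Every conjugate `μ` of `λ` has `μ ^ m` a conjugate of `λ ^ m`, because the minimal polynomial
of `λ` divides `p(X ^ m)` where `p` is the minimal polynomial of `λ ^ m`. The Perron property
of `λ ^ m` then gives `‖μ‖ ^ m ≤ λ ^ m`, and taking `m`-th roots gives `‖μ‖ ≤ λ`.
-/

open Polynomial

theorem minpoly.aeval_pow_eq_zero_of_aeval_eq_zero {K A B : Type*} [Field K] [Ring A]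
    [Algebra K A] [Ring B] [Algebra K B] {x : A} {μ : B} (n : ℕ)
    (hμ : Polynomial.aeval μ (minpoly K x) = 0) :
    Polynomial.aeval (μ ^ n) (minpoly K (x ^ n)) = 0 := by
  have hdvd : minpoly K x ∣ (minpoly K (x ^ n)).comp (X ^ n) := by
    apply minpoly.dvd
    simp [aeval_comp]
  obtain ⟨q, hq⟩ := hdvd
  have h := congrArg (Polynomial.aeval μ) hq
  rwa [map_mul, hμ, zero_mul, aeval_comp, map_pow, aeval_X] at h

theorem norm_le_of_aeval_minpoly_eq_zero_of_perron {r : ℝ} (hr : 0 ≤ r)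
    (hPerron : ∀ μ : ℂ, aeval μ (minpoly ℚ r) = 0 → μ ≠ (r : ℂ) → ‖μ‖ < r)
    {μ : ℂ} (hμ : aeval μ (minpoly ℚ r) = 0) : ‖μ‖ ≤ r := by
  by_cases h : μ = (r : ℂ)
  · subst h
    exact (Complex.norm_real r).trans_le (Real.norm_of_nonneg hr).le
  · exact (hPerron μ hμ h).le

/-- If `λ > 0` and `λ^m` is a Perron number for some `m ≥ 1`, then `λ` is a weak
Perron number. -/
theorem stmt_15 (lam : ℝ) (m : ℕ) (hm : 1 ≤ m) (hpos : 0 < lam)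
    (hint : IsIntegral ℤ (lam ^ m)) (h1 : 1 ≤ lam ^ m)
    (hPerron : ∀ μ : ℂ, Polynomial.aeval μ (minpoly ℚ (lam ^ m)) = 0 →
      μ ≠ ((lam ^ m : ℝ) : ℂ) → ‖μ‖ < lam ^ m) :
    IsIntegral ℤ lam ∧ 1 ≤ lam ∧
      ∀ μ : ℂ, Polynomial.aeval μ (minpoly ℚ lam) = 0 → ‖μ‖ ≤ lam := by
  have hm0 : m ≠ 0 := Nat.one_le_iff_ne_zero.mp hm
  refine ⟨hint.of_pow hm, (one_le_pow_iff_of_nonneg hpos.le hm0).mp h1, fun μ hμ => ?_⟩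
  have hpow : ‖μ‖ ^ m ≤ lam ^ m := by
    rw [← norm_pow]
    exact norm_le_of_aeval_minpoly_eq_zero_of_perron (by positivity) hPerron
      (minpoly.aeval_pow_eq_zero_of_aeval_eq_zero m hμ)
  exact (pow_le_pow_iff_left₀ (norm_nonneg μ) hpos.le hm0).mp hpow
end
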